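/- arXiv:2602.18575 — 4 statements merged into one kernel-verified Lean document; each statement's English description precedes it below -/
import Mathlib

section
/- Fix an integer k ≥ 1 and let F_k(s) = Σ_{j=1}^∞ ln(1/(1 − e^{j^k s})) for s < 0 be the fulcrum of P_k. For every integer m ≥ 0, the m-th derivative satisfies lim_{s↓0} s^{m+1/k} F_k^{(m)}(−s) = (1/k) ζ(1+1/k) Γ(m+1/k). -/
/-!
Expanding each logarithm, `F_k(s) = ∑_{n,j} e^{(n+1)(j+1)^k s}/(n+1)`, a double series of
exponentials that can be differentiated termwise on `s < 0`. Grouping by `n` gives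
`s^{m+1/k} F_k^{(m)}(-s) = ∑_n (n+1)^{-1-1/k} h((n+1)s)` with
`h(t) = t^{m+1/k} ∑_j (j+1)^{km} e^{-(j+1)^k t}`. For `t = u^k`, `h(t)` is a Riemann sum of
mesh `u` for `x^{km} e^{-x^k}`, so it is bounded and tends to
`∫_0^∞ x^{km} e^{-x^k} dx = Γ(m+1/k)/k`; dominated convergence in `n` then produces the factor
`∑_n (n+1)^{-1-1/k} = ζ(1+1/k)`.
-/

open Filter Topology

/-- Fulcrum of `P_k`: `F_k(s) = Σ_{j≥1} ln(1/(1 - e^{j^k s}))`, for `s < 0`. -/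
noncomputable def Fk (k : ℕ) (s : ℝ) : ℝ :=
  ∑' j : ℕ, Real.log (1 - Real.exp ((((j + 1) ^ k : ℕ) : ℝ) * s))⁻¹

open Real Set MeasureTheory
open scoped Nat

theorem pow_mul_exp_neg_le (n : ℕ) {x : ℝ} (hx : 0 ≤ x) :
    x ^ n * exp (-x) ≤ n ! * 2 ^ n * exp (-(x / 2)) := by
  calc x ^ n * exp (-x) = n ! * 2 ^ n * ((x / 2) ^ n / n !) * exp (-x) := by
        rw [div_pow]; field_simp
    _ ≤ n ! * 2 ^ n * exp (x / 2) * exp (-x) := by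
        gcongr; exact pow_div_factorial_le_exp _ (by positivity) n
    _ = n ! * 2 ^ n * exp (-(x / 2)) := by
        rw [mul_assoc, ← exp_add]; ring_nf

section ExpSeries

variable {ι : Type*} {a c : ι → ℝ} (ha : ∀ i, 0 ≤ a i)
  (hsum : ∀ m, ∀ s < 0, Summable fun i => c i * a i ^ m * exp (a i * s))
include ha hsum

theorem hasDerivAt_tsum_mul_pow_mul_exp (m : ℕ) {s : ℝ} (hs : s < 0) :
    HasDerivAt (fun s => ∑' i, c i * a i ^ m * exp (a i * s))
      (∑' i, c i * a i ^ (m + 1) * exp (a i * s)) s := by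
  have hs2 : s ∈ Iio (s / 2) := by rw [mem_Iio]; linarith
  refine hasDerivAt_tsum_of_isPreconnected (g := fun i s => c i * a i ^ m * exp (a i * s))
    (g' := fun i s => c i * a i ^ (m + 1) * exp (a i * s))
    (hsum (m + 1) (s / 2) (by linarith)).abs isOpen_Iio isPreconnected_Iio (fun i y _ => ?_)
    (fun i y hy => ?_) hs2 (hsum m s hs) hs2
  · have h := ((hasDerivAt_id y).const_mul (a i)).exp.const_mul (c i * a i ^ m)
    simp only [id, mul_one] at h
    exact h.congr_deriv (by ring)
  · have hexp : exp (a i * y) ≤ exp (a i * (s / 2)) :=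
      exp_le_exp.mpr (mul_le_mul_of_nonneg_left (le_of_lt hy) (ha i))
    rw [norm_eq_abs, abs_mul, abs_mul, abs_mul, abs_mul, abs_of_pos (exp_pos _),
      abs_of_pos (exp_pos _)]
    gcongr

theorem iteratedDeriv_eq_tsum_mul_pow_mul_exp {f : ℝ → ℝ}
    (hf : ∀ s < 0, f s = ∑' i, c i * exp (a i * s)) (m : ℕ) {s : ℝ} (hs : s < 0) :
    iteratedDeriv m f s = ∑' i, c i * a i ^ m * exp (a i * s) := by
  induction m generalizing s with
  | zero => simpa using hf s hs
  | succ m ih =>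
    have hloc : iteratedDeriv m f =ᶠ[𝓝 s] fun s => ∑' i, c i * a i ^ m * exp (a i * s) :=
      eventually_of_mem (Iio_mem_nhds hs) fun t ht => ih ht
    rw [iteratedDeriv_succ, hloc.deriv_eq]
    exact (hasDerivAt_tsum_mul_pow_mul_exp ha hsum m hs).deriv

end ExpSeries

section RiemannSum

variable {u : ℝ}

theorem le_natCeil_div_mul (hu : 0 < u) (x : ℝ) : x ≤ ⌈x / u⌉₊ * u :=
  (div_le_iff₀ hu).mp (Nat.le_ceil _)

theorem natCeil_div_mul_lt (hu : 0 < u) {x : ℝ} (hx : 0 ≤ x) : ⌈x / u⌉₊ * u < x + u := by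
  have h := Nat.ceil_lt_add_one (div_nonneg hx hu.le)
  calc (⌈x / u⌉₊ : ℝ) * u < (x / u + 1) * u := by gcongr
    _ = x + u := by field_simp

theorem mem_Ioc_nat_mul_iff (hu : 0 < u) {x : ℝ} {j : ℕ} :
    x ∈ Ioc (j * u) ((j + 1) * u) ↔ ⌈x / u⌉₊ = j + 1 := by
  rw [Nat.ceil_eq_iff (Nat.succ_ne_zero j), Nat.succ_sub_one, mem_Ioc, lt_div_iff₀ hu,
    div_le_iff₀ hu]
  push_cast
  rfl

theorem Ioi_zero_eq_iUnion_Ioc_nat_mul (hu : 0 < u) :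
    Ioi (0 : ℝ) = ⋃ j : ℕ, Ioc (j * u) ((j + 1) * u) := by
  ext x
  simp only [mem_Ioi, mem_iUnion, mem_Ioc_nat_mul_iff hu]
  rw [← div_pos_iff_of_pos_right hu, ← Nat.ceil_pos]
  exact ⟨fun h => ⟨_, (Nat.succ_pred_eq_of_pos h).symm⟩,
    fun ⟨j, hj⟩ => hj ▸ j.succ_pos⟩

theorem pairwise_disjoint_Ioc_nat_mul (hu : 0 < u) :
    Pairwise (Function.onFun Disjoint fun j : ℕ => Ioc (j * u) ((j + 1) * u)) := by
  intro i j hij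
  refine Set.disjoint_left.mpr fun x hi hj => hij ?_
  rw [mem_Ioc_nat_mul_iff hu] at hi hj
  omega

noncomputable def rightRiemannSum (g : ℝ → ℝ) (u : ℝ) : ℝ :=
  u * ∑' j : ℕ, g ((j + 1) * u)

theorem integral_comp_natCeil_div_mul {f : ℝ → ℝ} (hu : 0 < u)
    (hf : IntegrableOn (fun x => f (⌈x / u⌉₊ * u)) (Ioi 0)) :
    ∫ x in Ioi 0, f (⌈x / u⌉₊ * u) = rightRiemannSum f u := by
  rw [Ioi_zero_eq_iUnion_Ioc_nat_mul hu] at hf ⊢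
  rw [integral_iUnion (fun _ => measurableSet_Ioc) (pairwise_disjoint_Ioc_nat_mul hu) hf,
    rightRiemannSum, ← tsum_mul_left]
  refine tsum_congr fun j => ?_
  rw [setIntegral_congr_fun measurableSet_Ioc
      (fun x hx => by rw [(mem_Ioc_nat_mul_iff hu).mp hx, Nat.cast_succ]),
    setIntegral_const, volume_real_Ioc_of_le (by gcongr; linarith), smul_eq_mul]
  ring

theorem tendsto_natCeil_div_mul_nhdsGT_zero {x : ℝ} (hx : 0 ≤ x) :
    Tendsto (fun u : ℝ => (⌈x / u⌉₊ : ℝ) * u) (𝓝[>] 0) (𝓝 x) := by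
  have hupper : Tendsto (fun u : ℝ => x + u) (𝓝[>] 0) (𝓝 (x + 0)) :=
    (tendsto_const_nhds.add tendsto_id).mono_left nhdsWithin_le_nhds
  rw [add_zero] at hupper
  exact tendsto_of_tendsto_of_tendsto_of_le_of_le' tendsto_const_nhds hupper
    (eventually_mem_nhdsWithin.mono fun u hu => le_natCeil_div_mul hu x)
    (eventually_mem_nhdsWithin.mono fun u hu => (natCeil_div_mul_lt hu hx).le)

theorem Measurable.comp_natCeil_div_mul {g : ℝ → ℝ} (hg : Measurable g) :
    Measurable fun x => g (⌈x / u⌉₊ * u) :=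
  hg.comp ((measurable_from_nat (f := fun n : ℕ => (n : ℝ) * u)).comp
    (measurable_id.div_const u).nat_ceil)

-- A bound of `g` to the right of `x` by `D x` dominates the step functions
-- `x ↦ g (⌈x / u⌉₊ * u)`, whose integrals are the Riemann sums.
variable {g D : ℝ → ℝ} (hg : Continuous g) (hD : IntegrableOn D (Ioi 0))
  (hgD : ∀ x y, 0 < x → x ≤ y → ‖g y‖ ≤ D x)
include hg hD hgD

theorem integrableOn_comp_natCeil_div_mul (hu : 0 < u) :
    IntegrableOn (fun x => g (⌈x / u⌉₊ * u)) (Ioi 0) :=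
  hD.mono' hg.measurable.comp_natCeil_div_mul.aestronglyMeasurable
    (ae_restrict_of_forall_mem measurableSet_Ioi fun x hx => hgD x _ hx (le_natCeil_div_mul hu x))

theorem tendsto_rightRiemannSum :
    Tendsto (rightRiemannSum g) (𝓝[>] 0) (𝓝 (∫ x in Ioi 0, g x)) := by
  refine (tendsto_integral_filter_of_dominated_convergence D ?_ ?_ hD ?_).congr'
    (eventually_mem_nhdsWithin.mono fun u hu =>
      integral_comp_natCeil_div_mul hu (integrableOn_comp_natCeil_div_mul hg hD hgD hu))
  · exact Eventually.of_forall fun u => hg.measurable.comp_natCeil_div_mul.aestronglyMeasurable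
  · exact eventually_mem_nhdsWithin.mono fun u hu => ae_restrict_of_forall_mem measurableSet_Ioi
      fun x hx => hgD x _ hx (le_natCeil_div_mul hu x)
  · exact ae_restrict_of_forall_mem measurableSet_Ioi fun x hx =>
      (hg.tendsto x).comp (tendsto_natCeil_div_mul_nhdsGT_zero (le_of_lt hx))

theorem norm_rightRiemannSum_le (hu : 0 < u) :
    ‖rightRiemannSum g u‖ ≤ ∫ x in Ioi 0, D x := by
  rw [← integral_comp_natCeil_div_mul hu (integrableOn_comp_natCeil_div_mul hg hD hgD hu)]
  exact norm_integral_le_of_norm_le hD (ae_restrict_of_forall_mem measurableSet_Ioi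
    fun x hx => hgD x _ hx (le_natCeil_div_mul hu x))

end RiemannSum

theorem tendsto_tsum_mul_comp_nat_succ_mul {w : ℕ → ℝ} {h : ℝ → ℝ} {L B : ℝ}
    (hw : Summable w) (hh : Tendsto h (𝓝[>] 0) (𝓝 L)) (hB : ∀ t > 0, ‖h t‖ ≤ B) :
    Tendsto (fun s => ∑' n : ℕ, w n * h ((n + 1) * s)) (𝓝[>] 0)
      (𝓝 ((∑' n : ℕ, w n) * L)) := by
  rw [← tsum_mul_right]
  refine tendsto_tsum_of_dominated_convergence (hw.norm.mul_right B) (fun n => ?_) ?_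
  · have hscale := TendstoNhdsWithinIoi.const_mul (Nat.cast_add_one_pos n)
      (tendsto_id (x := 𝓝[>] (0 : ℝ)))
    rw [mul_zero] at hscale
    exact (hh.comp hscale).const_mul (w n)
  · filter_upwards [self_mem_nhdsWithin] with s hs n
    rw [norm_mul]
    exact mul_le_mul_of_nonneg_left (hB _ (mul_pos (Nat.cast_add_one_pos n) hs)) (norm_nonneg _)

theorem hasSum_riemannZeta_ofReal_re {p : ℝ} (hp : 1 < p) :
    HasSum (fun n : ℕ => 1 / ((n : ℝ) + 1) ^ p) (riemannZeta p).re := by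
  have hsum : Summable fun n : ℕ => 1 / ((n : ℝ) + 1) ^ p := by
    refine ((Real.summable_one_div_nat_add_rpow 1 p).mpr hp).congr fun n => ?_
    rw [abs_of_pos (by positivity)]
  have hterm :
      ∀ n : ℕ, 1 / ((n : ℂ) + 1) ^ (p : ℂ) = ((1 / ((n : ℝ) + 1) ^ p : ℝ) : ℂ) :=
    fun n => by
      rw [Complex.ofReal_div, Complex.ofReal_one, Complex.ofReal_cpow (by positivity)]
      push_cast; rfl
  rw [zeta_eq_tsum_one_div_nat_add_one_cpow (by simpa using hp), tsum_congr hterm,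
    ← Complex.ofReal_tsum, Complex.ofReal_re]
  exact hsum.hasSum

-- For `p = (n, j)`, the term `e^{(n+1)(j+1)^k s}/(n+1)` of `F_k(s)` is the `(n+1)`-st term of the
-- expansion of `-log (1 - e^{(j+1)^k s})`.
def fulcrumFreq (k : ℕ) (p : ℕ × ℕ) : ℝ := ((p.1 : ℝ) + 1) * ((p.2 : ℝ) + 1) ^ k

theorem fulcrumFreq_nonneg (k : ℕ) (p : ℕ × ℕ) : 0 ≤ fulcrumFreq k p := by
  unfold fulcrumFreq; positivity

theorem add_le_fulcrumFreq {k : ℕ} (hk : 1 ≤ k) (p : ℕ × ℕ) :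
    (p.1 : ℝ) + p.2 ≤ fulcrumFreq k p := by
  have h : (p.2 : ℝ) + 1 ≤ ((p.2 : ℝ) + 1) ^ k := le_self_pow₀ (by simp) (by omega)
  unfold fulcrumFreq
  nlinarith [mul_le_mul_of_nonneg_left h (by positivity : (0 : ℝ) ≤ (p.1 : ℝ) + 1),
    (p.1.cast_nonneg : (0 : ℝ) ≤ p.1), (p.2.cast_nonneg : (0 : ℝ) ≤ p.2)]

theorem summable_fulcrum_series {k : ℕ} (hk : 1 ≤ k) (m : ℕ) {s : ℝ} (hs : s < 0) :
    Summable fun p : ℕ × ℕ =>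
      ((p.1 : ℝ) + 1)⁻¹ * fulcrumFreq k p ^ m * exp (fulcrumFreq k p * s) := by
  set σ := -s with hσ
  have hσ0 : 0 < σ := by linarith
  set r := exp (-(σ / 2))
  have hr : Summable fun n : ℕ => r ^ n :=
    summable_geometric_of_lt_one (exp_pos _).le (exp_lt_one_iff.mpr (by linarith))
  refine Summable.of_nonneg_of_le (fun p => ?_) (fun p => ?_)
    ((hr.mul_of_nonneg hr (fun _ => by positivity) (fun _ => by positivity)).mul_left
      ((σ ^ m)⁻¹ * (m ! * 2 ^ m)))
  · have := fulcrumFreq_nonneg k p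
    positivity
  · have hA := fulcrumFreq_nonneg k p
    have hsA : fulcrumFreq k p * s = -(σ * fulcrumFreq k p) := by rw [hσ]; ring
    have hinv : ((p.1 : ℝ) + 1)⁻¹ ≤ 1 := inv_le_one_of_one_le₀ (by simp)
    have hscale : fulcrumFreq k p ^ m * exp (fulcrumFreq k p * s)
        = (σ ^ m)⁻¹ * ((σ * fulcrumFreq k p) ^ m * exp (-(σ * fulcrumFreq k p))) := by
      rw [hsA, mul_pow]; field_simp
    calc ((p.1 : ℝ) + 1)⁻¹ * fulcrumFreq k p ^ m * exp (fulcrumFreq k p * s)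
        ≤ fulcrumFreq k p ^ m * exp (fulcrumFreq k p * s) := by
          rw [mul_assoc]
          exact mul_le_of_le_one_left (mul_nonneg (pow_nonneg hA _) (exp_pos _).le) hinv
      _ ≤ (σ ^ m)⁻¹ * (m ! * 2 ^ m) * exp (-(σ * fulcrumFreq k p / 2)) := by
          rw [hscale, mul_assoc (σ ^ m)⁻¹]
          exact mul_le_mul_of_nonneg_left (pow_mul_exp_neg_le m (mul_nonneg hσ0.le hA))
            (by positivity)
      _ ≤ (σ ^ m)⁻¹ * (m ! * 2 ^ m) * (r ^ p.1 * r ^ p.2) := by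
          rw [← exp_nat_mul, ← exp_nat_mul, ← exp_add]
          gcongr ?_ * exp ?_
          nlinarith [add_le_fulcrumFreq hk p]

theorem Fk_eq_tsum {k : ℕ} (hk : 1 ≤ k) {s : ℝ} (hs : s < 0) :
    Fk k s = ∑' p : ℕ × ℕ, ((p.1 : ℝ) + 1)⁻¹ * exp (fulcrumFreq k p * s) := by
  have hsum := summable_fulcrum_series hk 0 hs
  simp only [pow_zero, mul_one] at hsum
  rw [← (Equiv.prodComm ℕ ℕ).tsum_eq, Equiv.coe_prodComm, hsum.prod_symm.tsum_prod]
  refine tsum_congr fun j => ?_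
  have hx : |exp (((j : ℝ) + 1) ^ k * s)| < 1 := by
    rw [abs_of_pos (exp_pos _), exp_lt_one_iff]
    exact mul_neg_of_pos_of_neg (by positivity) hs
  have hlog := hasSum_pow_div_log_of_abs_lt_one hx
  rw [Real.log_inv, Nat.cast_pow, Nat.cast_succ, ← hlog.tsum_eq]
  refine tsum_congr fun n => ?_
  rw [← exp_nat_mul]
  simp only [Prod.swap_prod_mk, fulcrumFreq]
  push_cast
  ring_nf

theorem iteratedDeriv_Fk {k : ℕ} (hk : 1 ≤ k) (m : ℕ) {s : ℝ} (hs : s < 0) :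
    iteratedDeriv m (Fk k) s =
      ∑' p : ℕ × ℕ,
        ((p.1 : ℝ) + 1)⁻¹ * fulcrumFreq k p ^ m * exp (fulcrumFreq k p * s) :=
  iteratedDeriv_eq_tsum_mul_pow_mul_exp (fulcrumFreq_nonneg k)
    (fun m _ hs => summable_fulcrum_series hk m hs) (fun _ hs => Fk_eq_tsum hk hs) m hs

theorem integral_pow_pow_mul_exp_neg_pow {k : ℕ} (hk : 1 ≤ k) (m : ℕ) :
    ∫ x in Ioi (0 : ℝ), (x ^ k) ^ m * exp (-x ^ k) = 1 / k * Gamma (m + 1 / k) := by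
  have hk0 : (0 : ℝ) < k := by exact_mod_cast hk
  have h := integral_rpow_mul_exp_neg_rpow hk0
    (lt_of_lt_of_le neg_one_lt_zero (Nat.cast_nonneg (k * m)))
  rw [show (((k * m : ℕ) : ℝ) + 1) / k = m + 1 / k by push_cast; field_simp] at h
  rw [← h]
  refine setIntegral_congr_fun measurableSet_Ioi fun x _ => ?_
  simp only [rpow_natCast, pow_mul]

theorem norm_pow_pow_mul_exp_neg_pow_le {k : ℕ} (hk : 1 ≤ k) (m : ℕ) {x y : ℝ} (hx : 0 < x)
    (hxy : x ≤ y) :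
    ‖(y ^ k) ^ m * exp (-y ^ k)‖ ≤ m ! * 2 ^ m * exp (1 / 2) * exp (-(1 / 2) * x) := by
  have hyk : 0 ≤ y ^ k := pow_nonneg (hx.le.trans hxy) k
  have hxk : x - 1 ≤ y ^ k := by
    rcases le_or_gt 1 x with h | h
    · exact (sub_le_self _ zero_le_one).trans
        ((le_self_pow₀ h (by omega)).trans (pow_le_pow_left₀ hx.le hxy k))
    · linarith
  rw [norm_of_nonneg (by positivity)]
  calc (y ^ k) ^ m * exp (-y ^ k) ≤ m ! * 2 ^ m * exp (-(y ^ k / 2)) := pow_mul_exp_neg_le m hyk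
    _ ≤ m ! * 2 ^ m * exp (1 / 2 + -(1 / 2) * x) := by gcongr; linarith
    _ = m ! * 2 ^ m * exp (1 / 2) * exp (-(1 / 2) * x) := by rw [exp_add]; ring

noncomputable def sumPowExp (k m : ℕ) (t : ℝ) : ℝ :=
  ∑' j : ℕ, (((j : ℝ) + 1) ^ k) ^ m * exp (-(((j : ℝ) + 1) ^ k * t))

section SumPowExp

variable {k : ℕ} (hk : 1 ≤ k) (m : ℕ)
include hk

theorem rpow_mul_sumPowExp_eq_rightRiemannSum {t : ℝ} (ht : 0 < t) :
    t ^ ((m : ℝ) + 1 / k) * sumPowExp k m t =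
      rightRiemannSum (fun x => (x ^ k) ^ m * exp (-x ^ k)) (t ^ (1 / k : ℝ)) := by
  have hroot : (t ^ (1 / k : ℝ)) ^ k = t := by
    rw [← rpow_natCast, ← rpow_mul ht.le, one_div_mul_cancel (by positivity), rpow_one]
  simp only [rightRiemannSum, mul_pow _ (t ^ (1 / k : ℝ)), hroot]
  rw [rpow_add ht, rpow_natCast, sumPowExp, ← tsum_mul_left, ← tsum_mul_left]
  refine tsum_congr fun j => ?_
  rw [mul_pow]
  ring

theorem tendsto_rpow_mul_sumPowExp :
    Tendsto (fun t => t ^ ((m : ℝ) + 1 / k) * sumPowExp k m t) (𝓝[>] 0)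
      (𝓝 (1 / k * Gamma (m + 1 / k))) := by
  have hroot : Tendsto (fun t : ℝ => t ^ (1 / k : ℝ)) (𝓝[>] 0) (𝓝[>] 0) := by
    refine tendsto_nhdsWithin_iff.mpr
      ⟨?_, eventually_mem_nhdsWithin.mono fun t ht => rpow_pos_of_pos ht _⟩
    have h := ((continuous_rpow_const (by positivity : (0 : ℝ) ≤ 1 / k)).tendsto 0).mono_left
      (nhdsWithin_le_nhds (s := Ioi 0))
    rwa [zero_rpow (by positivity)] at h
  rw [← integral_pow_pow_mul_exp_neg_pow hk]
  refine ((tendsto_rightRiemannSum (by fun_prop)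
    ((exp_neg_integrableOn_Ioi 0 (by norm_num)).const_mul _)
    fun x y hx hxy => norm_pow_pow_mul_exp_neg_pow_le hk m hx hxy).comp hroot).congr' ?_
  exact eventually_mem_nhdsWithin.mono fun t ht =>
    (rpow_mul_sumPowExp_eq_rightRiemannSum hk m ht).symm

theorem exists_norm_rpow_mul_sumPowExp_le :
    ∃ B, ∀ t > 0, ‖t ^ ((m : ℝ) + 1 / k) * sumPowExp k m t‖ ≤ B := by
  refine ⟨∫ x in Ioi 0, m ! * 2 ^ m * exp (1 / 2) * exp (-(1 / 2) * x), fun t ht => ?_⟩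
  rw [rpow_mul_sumPowExp_eq_rightRiemannSum hk m ht]
  exact norm_rightRiemannSum_le (by fun_prop)
    ((exp_neg_integrableOn_Ioi 0 (by norm_num)).const_mul _)
    (fun x y hx hxy => norm_pow_pow_mul_exp_neg_pow_le hk m hx hxy) (rpow_pos_of_pos ht _)

end SumPowExp

theorem rpow_mul_iteratedDeriv_Fk_neg {k : ℕ} (hk : 1 ≤ k) (m : ℕ) {s : ℝ} (hs : 0 < s) :
    s ^ ((m : ℝ) + 1 / k) * iteratedDeriv m (Fk k) (-s) =
      ∑' n : ℕ, 1 / ((n : ℝ) + 1) ^ (1 + 1 / k : ℝ) *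
        (((n + 1) * s) ^ ((m : ℝ) + 1 / k) * sumPowExp k m ((n + 1) * s)) := by
  have hneg : -s < 0 := neg_lt_zero.mpr hs
  rw [iteratedDeriv_Fk hk m hneg, (summable_fulcrum_series hk m hneg).tsum_prod, ← tsum_mul_left]
  refine tsum_congr fun n => ?_
  have hn : (0 : ℝ) < n + 1 := Nat.cast_add_one_pos n
  rw [sumPowExp, ← tsum_mul_left, ← tsum_mul_left, ← tsum_mul_left]
  refine tsum_congr fun j => ?_
  have hexp :
      ((n : ℝ) + 1) * ((j : ℝ) + 1) ^ k * -s = -(((j : ℝ) + 1) ^ k * ((n + 1) * s)) := by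
    ring
  rw [mul_rpow hn.le hs.le, rpow_add hn, rpow_add hn, rpow_natCast, rpow_one, fulcrumFreq,
    mul_pow, hexp]
  field_simp

theorem stmt3 (k : ℕ) (hk : 1 ≤ k) (m : ℕ) :
    Tendsto (fun s : ℝ => s ^ ((m : ℝ) + 1 / k) * iteratedDeriv m (Fk k) (-s))
      (𝓝[>] (0 : ℝ))
      (𝓝 ((1 / k) * (riemannZeta (1 + 1 / (k : ℂ))).re * Real.Gamma (m + 1 / k))) := by
  have hzeta :=
    hasSum_riemannZeta_ofReal_re (lt_add_of_pos_right 1 (by positivity : (0 : ℝ) < 1 / k))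
  obtain ⟨B, hB⟩ := exists_norm_rpow_mul_sumPowExp_le hk m
  have hlim := tendsto_tsum_mul_comp_nat_succ_mul hzeta.summable
    (tendsto_rpow_mul_sumPowExp hk m) hB
  rw [hzeta.tsum_eq] at hlim
  push_cast at hlim
  rw [mul_comm (1 / (k : ℝ)), mul_assoc]
  exact hlim.congr' (eventually_mem_nhdsWithin.mono fun s hs =>
    (rpow_mul_iteratedDeriv_Fk_neg hk m hs).symm)
end

section
/- Fix an integer k ≥ 1 and set m̃_k(e^{-s}) = ω_{k,1} s^{-(1+1/k)} for s > 0, where ω_{k,1} = (1/k) ζ(1+1/k) Γ(1+1/k). Then (m_k(e^{-s}) − m̃_k(e^{-s})) / σ_k(e^{-s}) = O(s^{1/(2k)}) as s ↓ 0; that is, there exist C > 0 and s₀ > 0 such that |m_k(e^{-s}) − m̃_k(e^{-s})| ≤ C s^{1/(2k)} σ_k(e^{-s}) for all 0 < s < s₀. -/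
open Filter Topology

/-- Mean of the Khinchin family of `P_k` at `t = e^{-s}`:
`m_k(e^{-s}) = Σ_{j≥1} j^k e^{-j^k s}/(1 - e^{-j^k s})`. -/
noncomputable def mkS (k : ℕ) (s : ℝ) : ℝ :=
  ∑' j : ℕ, (((j + 1) ^ k : ℕ) : ℝ) * Real.exp (-((((j + 1) ^ k : ℕ) : ℝ) * s)) /
    (1 - Real.exp (-((((j + 1) ^ k : ℕ) : ℝ) * s)))

/-- Variance of the Khinchin family of `P_k` at `t = e^{-s}`:
`σ_k²(e^{-s}) = Σ_{j≥1} j^{2k} e^{-j^k s}/(1 - e^{-j^k s})²`. -/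
noncomputable def sigSq (k : ℕ) (s : ℝ) : ℝ :=
  ∑' j : ℕ, (((j + 1) ^ (2 * k) : ℕ) : ℝ) * Real.exp (-((((j + 1) ^ k : ℕ) : ℝ) * s)) /
    (1 - Real.exp (-((((j + 1) ^ k : ℕ) : ℝ) * s))) ^ 2

/-- `ω_{k,1} = (1/k) ζ(1+1/k) Γ(1+1/k)`. -/
noncomputable def omega1 (k : ℕ) : ℝ :=
  (1 / k) * (riemannZeta (1 + 1 / (k : ℂ))).re * Real.Gamma (1 + 1 / k)

/-
Write `m_k(e^{-s}) = Σ_{j ≥ 1} g(j)` with `g(x) = x^k / (e^{s x^k} - 1)`. Expanding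
`1 / (e^t - 1) = Σ_{n ≥ 1} e^{-n t}` and integrating termwise against the Gamma integral gives
`∫_0^∞ g = ω_{k,1} s^{-(1+1/k)}`; since `g` is decreasing and bounded by `1/s`, comparing the
sum with the integral gives `|m_k - m̃_k| ≤ 1/s`. On the other hand, each of the `⌊s^{-1/k}⌋`
terms of `σ_k²` with `j^k s ≤ 1` is at least `e^{-1} / s²`, so `σ_k² ≥ s^{-(2+1/k)} / (2e)`,
which turns `1/s` into `√(2e) s^{1/(2k)} σ_k`.
-/

open Real MeasureTheory Set Function
open scoped ENNReal

lemma one_sub_exp_neg (t : ℝ) : 1 - exp (-t) = exp (-t) * (exp t - 1) := by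
  rw [mul_sub, ← exp_add, neg_add_cancel, exp_zero, mul_one]

noncomputable def meanSummand (k : ℕ) (s x : ℝ) : ℝ := x ^ k / (exp (s * x ^ k) - 1)

section MeanSummand

variable {k : ℕ} {s x : ℝ}

lemma meanSummand_nonneg (hs : 0 ≤ s) (hx : 0 ≤ x) : 0 ≤ meanSummand k s x := by
  have : 0 ≤ exp (s * x ^ k) - 1 := by simp only [sub_nonneg, one_le_exp_iff]; positivity
  unfold meanSummand; positivity

lemma meanSummand_le_inv (hs : 0 < s) (hx : 0 < x) : meanSummand k s x ≤ s⁻¹ := by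
  have ht : 0 < s * x ^ k := by positivity
  rw [meanSummand, div_le_iff₀ (by simpa using ht), inv_mul_eq_div, le_div_iff₀ hs]
  nlinarith [add_one_le_exp (s * x ^ k)]

lemma exp_sub_one_div_monotoneOn : MonotoneOn (fun t => (exp t - 1) / t) (Ioi 0) := by
  intro u hu v hv huv
  simpa using convexOn_exp.secant_mono (mem_univ 0) (mem_univ u) (mem_univ v)
    (ne_of_gt hu) (ne_of_gt hv) huv

lemma meanSummand_antitoneOn (hs : 0 < s) : AntitoneOn (meanSummand k s) (Ioi 0) := by
  have key : ∀ x : ℝ, 0 < x →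
      meanSummand k s x = s⁻¹ * ((exp (s * x ^ k) - 1) / (s * x ^ k))⁻¹ := by
    intro x hx
    have : 0 < x ^ k := pow_pos hx k
    rw [meanSummand]; field_simp
  intro x (hx : 0 < x) y (hy : 0 < y) hxy
  have htx : 0 < s * x ^ k := by positivity
  have hty : s * x ^ k ≤ s * y ^ k := by gcongr
  rw [key x hx, key y hy]
  refine mul_le_mul_of_nonneg_left (inv_anti₀ (div_pos (by simpa using htx) htx) ?_) (by positivity)
  exact exp_sub_one_div_monotoneOn htx (htx.trans_le hty) hty

lemma hasSum_meanSummand (hs : 0 < s) (hx : 0 < x) :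
    HasSum (fun n : ℕ => x ^ k * exp (-((n + 1) * s * x ^ k))) (meanSummand k s x) := by
  have hr : exp (-(s * x ^ k)) < 1 := exp_lt_one_iff.2 (by simp only [Left.neg_neg_iff]; positivity)
  have hval : meanSummand k s x = x ^ k * exp (-(s * x ^ k)) * (1 - exp (-(s * x ^ k)))⁻¹ := by
    rw [one_sub_exp_neg, meanSummand]
    field_simp
  rw [hval]
  refine ((hasSum_geometric_of_lt_one (exp_pos _).le hr).mul_left _).congr_fun fun n => ?_
  rw [← exp_nat_mul, mul_assoc (x ^ k), ← exp_add]
  ring_nf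

lemma mkS_eq_tsum_meanSummand (s : ℝ) : mkS k s = ∑' j : ℕ, meanSummand k s (j + 1) := by
  refine tsum_congr fun j => ?_
  set t : ℝ := s * ((j : ℝ) + 1) ^ k
  push_cast
  rw [mul_comm _ s, one_sub_exp_neg, mul_comm _ (exp (-t)),
    mul_div_mul_left _ _ (exp_ne_zero _), meanSummand]

end MeanSummand

lemma lintegral_Ioi_zero_eq_tsum_Ioc (f : ℝ → ℝ≥0∞) :
    ∫⁻ x in Ioi 0, f x = ∑' j : ℕ, ∫⁻ x in Ioc (j : ℝ) (j + 1), f x := by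
  have hunion : ⋃ j : ℕ, Ioc (j : ℝ) (j + 1) = Ioi 0 := by
    ext x
    simp only [mem_iUnion, mem_Ioc, mem_Ioi]
    refine ⟨fun ⟨j, hj, _⟩ => (Nat.cast_nonneg j).trans_lt hj, fun hx => ?_⟩
    obtain ⟨j, hj⟩ := Nat.exists_eq_add_one_of_ne_zero (Nat.ceil_pos.2 hx).ne'
    exact ⟨j, by simpa [hj] using (Nat.ceil_eq_iff (by omega)).1 hj⟩
  have hdisj : Pairwise (Disjoint on fun j : ℕ => Ioc (j : ℝ) (j + 1)) := fun i j hij => by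
    simpa using pairwise_disjoint_Ioc_intCast ℝ (Nat.cast_injective.ne hij : (i : ℤ) ≠ j)
  rw [← hunion, lintegral_iUnion (fun _ => measurableSet_Ioc) hdisj]

lemma AntitoneOn.abs_tsum_sub_le_of_lintegral_eq {f : ℝ → ℝ} {I B : ℝ}
    (hf : AntitoneOn f (Ioi 0)) (hf0 : ∀ x ∈ Ioi 0, 0 ≤ f x) (hB : ∀ x ∈ Ioi 0, f x ≤ B)
    (hI0 : 0 ≤ I) (hI : ∫⁻ x in Ioi 0, ENNReal.ofReal (f x) = ENNReal.ofReal I) :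
    |∑' j : ℕ, f (j + 1) - I| ≤ B := by
  set P : ℕ → ℝ≥0∞ := fun j => ∫⁻ x in Ioc (j : ℝ) (j + 1), ENNReal.ofReal (f x)
  have hconst : ∀ (a c : ℝ), ∫⁻ _ in Ioc a (a + 1), ENNReal.ofReal c = ENNReal.ofReal c := by
    simp
  have hlower : ∀ j : ℕ, ENNReal.ofReal (f (j + 1)) ≤ P j := fun j => by
    rw [← hconst j]
    refine lintegral_mono_ae ?_
    filter_upwards [ae_restrict_mem measurableSet_Ioc] with x ⟨hjx, hxj⟩
    exact ENNReal.ofReal_le_ofReal <|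
      hf ((Nat.cast_nonneg j).trans_lt hjx) (by simp only [mem_Ioi]; positivity) hxj
  have hupper : ∀ j : ℕ, P (j + 1) ≤ ENNReal.ofReal (f (j + 1)) := fun j => by
    rw [← hconst ((j + 1 : ℕ) : ℝ) (f (j + 1))]
    refine lintegral_mono_ae ?_
    filter_upwards [ae_restrict_mem measurableSet_Ioc] with x ⟨hjx, _⟩
    push_cast at hjx
    exact ENNReal.ofReal_le_ofReal <|
      hf (by simp only [mem_Ioi]; positivity) (by simp only [mem_Ioi]; linarith) hjx.le
  have hfirst : P 0 ≤ ENNReal.ofReal B := by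
    rw [← hconst ((0 : ℕ) : ℝ) B]
    refine lintegral_mono_ae ?_
    filter_upwards [ae_restrict_mem measurableSet_Ioc] with x ⟨hx, _⟩
    exact ENNReal.ofReal_le_ofReal (hB x (by simpa using hx))
  rw [lintegral_Ioi_zero_eq_tsum_Ioc] at hI
  have hsum_le : ∑' j : ℕ, ENNReal.ofReal (f (j + 1)) ≤ ENNReal.ofReal I :=
    hI ▸ ENNReal.tsum_le_tsum hlower
  have hf1 : ∀ j : ℕ, 0 ≤ f (j + 1) := fun j => hf0 _ (by simp only [mem_Ioi]; positivity)
  have hsummable : Summable fun j : ℕ => f (j + 1) := by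
    simpa [ENNReal.toReal_ofReal (hf1 _)] using
      ENNReal.summable_toReal (ne_top_of_le_ne_top ENNReal.ofReal_ne_top hsum_le)
  have hB0 : 0 ≤ B := (hf0 1 (mem_Ioi.2 one_pos)).trans (hB 1 (mem_Ioi.2 one_pos))
  rw [← ENNReal.ofReal_tsum_of_nonneg hf1 hsummable] at hsum_le
  have hI_le : ENNReal.ofReal I ≤ ENNReal.ofReal (B + ∑' j : ℕ, f (j + 1)) := by
    rw [← hI, tsum_eq_zero_add' ENNReal.summable,
      ENNReal.ofReal_add hB0 (tsum_nonneg hf1), ENNReal.ofReal_tsum_of_nonneg hf1 hsummable]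
    exact add_le_add hfirst (ENNReal.tsum_le_tsum hupper)
  rw [ENNReal.ofReal_le_ofReal_iff hI0] at hsum_le
  rw [ENNReal.ofReal_le_ofReal_iff (add_nonneg hB0 (tsum_nonneg hf1))] at hI_le
  rw [abs_le]
  constructor <;> linarith

lemma riemannZeta_re_eq_tsum {p : ℝ} (hp : 1 < p) :
    (riemannZeta p).re = ∑' n : ℕ, ((n : ℝ) + 1) ^ (-p) := by
  rw [zeta_eq_tsum_one_div_nat_add_one_cpow (by simpa using hp)]
  have hterm : ∀ n : ℕ, 1 / ((n : ℂ) + 1) ^ (p : ℂ) = ((((n : ℝ) + 1) ^ (-p) : ℝ) : ℂ) := by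
    intro n
    rw [rpow_neg (by positivity), Complex.ofReal_inv, Complex.ofReal_cpow (by positivity)]
    push_cast
    rw [one_div]
  simp_rw [hterm, ← Complex.ofReal_tsum, Complex.ofReal_re]

lemma summable_nat_add_one_rpow {p : ℝ} (hp : p < -1) :
    Summable fun n : ℕ => ((n : ℝ) + 1) ^ p := by
  simpa using (summable_nat_add_iff 1).2 (Real.summable_nat_rpow.2 hp)

lemma omega1_eq_tsum {k : ℕ} (hk : 0 < k) :
    omega1 k = 1 / k * (∑' n : ℕ, ((n : ℝ) + 1) ^ (-(1 + 1 / k : ℝ))) * Gamma (1 + 1 / k) := by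
  have hp : 1 < 1 + 1 / (k : ℝ) := by simp; positivity
  rw [omega1, ← riemannZeta_re_eq_tsum hp]
  push_cast
  rfl

lemma lintegral_pow_mul_exp_neg_mul_pow {k : ℕ} (hk : 0 < k) {b : ℝ} (hb : 0 < b) :
    ∫⁻ x in Ioi 0, ENNReal.ofReal (x ^ k * exp (-(b * x ^ k))) =
      ENNReal.ofReal (b ^ (-(1 + 1 / k : ℝ)) * (1 / k) * Gamma (1 + 1 / k)) := by
  have hk' : (0 : ℝ) < k := by exact_mod_cast hk
  simp_rw [← rpow_natCast, ← neg_mul]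
  rw [← ofReal_integral_eq_lintegral_ofReal
      (integrableOn_rpow_mul_exp_neg_mul_rpow (by linarith) hk' hb)
      (ae_restrict_of_forall_mem measurableSet_Ioi fun x (hx : 0 < x) => by positivity),
    integral_rpow_mul_exp_neg_mul_rpow hk' (by linarith) hb]
  congr 4 <;> field_simp

lemma lintegral_meanSummand {k : ℕ} (hk : 0 < k) {s : ℝ} (hs : 0 < s) :
    ∫⁻ x in Ioi 0, ENNReal.ofReal (meanSummand k s x) =
      ENNReal.ofReal (omega1 k * s ^ (-(1 + 1 / k : ℝ))) := by
  set c := s ^ (-(1 + 1 / k : ℝ)) * (1 / k) * Gamma (1 + 1 / k) with hc_def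
  have hc : 0 ≤ c := by
    have hΓ := Gamma_pos_of_pos (by positivity : (0 : ℝ) < 1 + 1 / k)
    positivity
  have hp : -(1 + 1 / k : ℝ) < -1 := by simp; positivity
  have hexpand : ∀ x ∈ Ioi (0 : ℝ), ENNReal.ofReal (meanSummand k s x) =
      ∑' n : ℕ, ENNReal.ofReal (x ^ k * exp (-((n + 1) * s * x ^ k))) := fun x (hx : 0 < x) => by
    rw [← (hasSum_meanSummand hs hx).tsum_eq,
      ENNReal.ofReal_tsum_of_nonneg (fun n => by positivity) (hasSum_meanSummand hs hx).summable]
  have hterm : ∀ n : ℕ, ∫⁻ x in Ioi 0, ENNReal.ofReal (x ^ k * exp (-((n + 1) * s * x ^ k))) =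
      ENNReal.ofReal (((n : ℝ) + 1) ^ (-(1 + 1 / k : ℝ)) * c) := fun n => by
    rw [lintegral_pow_mul_exp_neg_mul_pow hk (by positivity), mul_rpow (by positivity) hs.le,
      hc_def]
    ring_nf
  rw [setLIntegral_congr_fun measurableSet_Ioi hexpand,
    lintegral_tsum fun n => by fun_prop, tsum_congr hterm,
    ← ENNReal.ofReal_tsum_of_nonneg (fun n => by positivity)
      ((summable_nat_add_one_rpow hp).mul_right c), tsum_mul_right, omega1_eq_tsum hk, hc_def]
  ring_nf

lemma omega1_nonneg {k : ℕ} (hk : 0 < k) : 0 ≤ omega1 k := by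
  rw [omega1_eq_tsum hk]
  have hΓ := Gamma_pos_of_pos (by positivity : (0 : ℝ) < 1 + 1 / k)
  have hζ : 0 ≤ ∑' n : ℕ, ((n : ℝ) + 1) ^ (-(1 + 1 / k : ℝ)) := tsum_nonneg fun n => by positivity
  positivity

lemma abs_mkS_sub_le {k : ℕ} (hk : 0 < k) {s : ℝ} (hs : 0 < s) :
    |mkS k s - omega1 k * s ^ (-(1 + 1 / k : ℝ))| ≤ s⁻¹ := by
  rw [mkS_eq_tsum_meanSummand]
  exact (meanSummand_antitoneOn hs).abs_tsum_sub_le_of_lintegral_eq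
    (fun x hx => meanSummand_nonneg hs.le (le_of_lt hx)) (fun x hx => meanSummand_le_inv hs hx)
    (mul_nonneg (omega1_nonneg hk) (rpow_nonneg hs.le _)) (lintegral_meanSummand hk hs)

noncomputable def varSummand (k : ℕ) (s x : ℝ) : ℝ :=
  x ^ (2 * k) * exp (-(s * x ^ k)) / (1 - exp (-(s * x ^ k))) ^ 2

section VarSummand

variable {k : ℕ} {s x : ℝ}

lemma sigSq_eq_tsum_varSummand (k : ℕ) (s : ℝ) :
    sigSq k s = ∑' j : ℕ, varSummand k s (j + 1) := by
  refine tsum_congr fun j => ?_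
  push_cast
  rw [varSummand, mul_comm _ s]

lemma varSummand_nonneg : 0 ≤ varSummand k s x := by
  rw [varSummand, pow_mul]
  positivity

lemma exp_neg_div_sq_le_varSummand (hs : 0 < s) (hx : 0 < x) :
    exp (-(s * x ^ k)) / s ^ 2 ≤ varSummand k s x := by
  have ht : 0 < s * x ^ k := by positivity
  have hden : 0 < 1 - exp (-(s * x ^ k)) := by
    simpa using exp_lt_one_iff.2 (neg_lt_zero.2 ht)
  have hden_le : (1 - exp (-(s * x ^ k))) ^ 2 ≤ (s * x ^ k) ^ 2 := by
    gcongr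
    linarith [add_one_le_exp (-(s * x ^ k))]
  rw [varSummand, div_le_div_iff₀ (by positivity) (by positivity)]
  calc exp (-(s * x ^ k)) * (1 - exp (-(s * x ^ k))) ^ 2
      ≤ exp (-(s * x ^ k)) * (s * x ^ k) ^ 2 := by gcongr
    _ = x ^ (2 * k) * exp (-(s * x ^ k)) * s ^ 2 := by ring

lemma summable_varSummand (hk : 0 < k) (hs : 0 < s) :
    Summable fun j : ℕ => varSummand k s (j + 1) := by
  have hr : exp (-s) < 1 := exp_lt_one_iff.2 (by linarith)
  have hgeom : Summable fun j : ℕ => ((j : ℝ) + 1) ^ (2 * k) * exp (-s) ^ (j + 1) := by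
    refine ((summable_nat_add_iff 1).2 (summable_pow_mul_geometric_of_norm_lt_one (R := ℝ) (2 * k)
      (by rwa [norm_of_nonneg (exp_pos _).le]))).congr fun j => ?_
    push_cast
    rfl
  refine (hgeom.div_const ((1 - exp (-s)) ^ 2)).of_nonneg_of_le (fun j => varSummand_nonneg)
    fun j => ?_
  have hx : (1 : ℝ) ≤ j + 1 := by simp
  have hxk : (j : ℝ) + 1 ≤ ((j : ℝ) + 1) ^ k := le_self_pow₀ hx hk.ne'
  have hexp : exp (-(s * ((j : ℝ) + 1) ^ k)) ≤ exp (-s) ^ (j + 1) := by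
    rw [← exp_nat_mul, exp_le_exp]
    push_cast
    nlinarith
  have hden_le : 1 - exp (-s) ≤ 1 - exp (-(s * ((j : ℝ) + 1) ^ k)) := by
    gcongr
    nlinarith
  rw [varSummand]
  gcongr

end VarSummand

lemma rpow_le_two_mul_exp_one_mul_sigSq {k : ℕ} (hk : 0 < k) {s : ℝ} (hs : 0 < s) (hs1 : s ≤ 1) :
    s ^ (-(2 + 1 / k : ℝ)) ≤ 2 * exp 1 * sigSq k s := by
  set x := s ^ (-(1 / k : ℝ))
  have hx1 : 1 ≤ x := one_le_rpow_of_pos_of_le_one_of_nonpos hs hs1 (by simp)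
  have hsx : s * x ^ k = 1 := by
    rw [← rpow_natCast, ← rpow_mul hs.le, neg_mul, one_div_mul_cancel (by positivity),
      rpow_neg_one, mul_inv_cancel₀ hs.ne']
  set N := ⌊x⌋₊
  have hterm : ∀ j ∈ Finset.range N, exp (-1) / s ^ 2 ≤ varSummand k s (j + 1) := by
    intro j hj
    have hjx : ((j + 1 : ℕ) : ℝ) ≤ x :=
      (Nat.le_floor_iff (by positivity)).1 (Finset.mem_range.1 hj)
    push_cast at hjx
    have hsj : s * ((j : ℝ) + 1) ^ k ≤ 1 :=
      (by gcongr : s * ((j : ℝ) + 1) ^ k ≤ s * x ^ k).trans hsx.le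
    refine le_trans ?_ (exp_neg_div_sq_le_varSummand hs (by positivity))
    gcongr
  calc s ^ (-(2 + 1 / k : ℝ)) = x / s ^ 2 := by
        rw [show -(2 + 1 / k : ℝ) = -(1 / k) + (-2 : ℤ) by push_cast; ring, rpow_add hs,
          rpow_intCast, zpow_neg, zpow_ofNat, ← div_eq_mul_inv]
    _ ≤ 2 * exp 1 * (N * (exp (-1) / s ^ 2)) := by
        have hxN : x ≤ 2 * N := by linarith [Nat.div_two_lt_floor hx1]
        rw [show 2 * exp 1 * (N * (exp (-1) / s ^ 2)) = 2 * N / s ^ 2 by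
          rw [exp_neg]; field_simp]
        gcongr
    _ ≤ 2 * exp 1 * ∑ j ∈ Finset.range N, varSummand k s (j + 1) := by
        gcongr
        simpa using Finset.card_nsmul_le_sum _ _ _ hterm
    _ ≤ 2 * exp 1 * sigSq k s := by
        rw [sigSq_eq_tsum_varSummand]
        gcongr
        exact (summable_varSummand hk hs).sum_le_tsum _ fun j _ => varSummand_nonneg

theorem stmt7 (k : ℕ) (hk : 1 ≤ k) :
    ∃ C > (0 : ℝ), ∃ s₀ > (0 : ℝ), ∀ s : ℝ, 0 < s → s < s₀ →
      |mkS k s - omega1 k * s ^ (-(1 + 1 / (k : ℝ)))| ≤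
        C * s ^ (1 / (2 * (k : ℝ))) * Real.sqrt (sigSq k s) := by
  refine ⟨√(2 * exp 1), by positivity, 1, one_pos, fun s hs hs1 => ?_⟩
  calc |mkS k s - omega1 k * s ^ (-(1 + 1 / (k : ℝ)))| ≤ s⁻¹ := abs_mkS_sub_le hk hs
    _ = s ^ (1 / (2 * (k : ℝ))) * √(s ^ (-(2 + 1 / k : ℝ))) := by
        rw [sqrt_eq_rpow, ← rpow_mul hs.le, ← rpow_add hs, ← rpow_neg_one]
        congr 1
        field_simp
        ring
    _ ≤ s ^ (1 / (2 * (k : ℝ))) * √(2 * exp 1 * sigSq k s) := by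
        gcongr
        exact rpow_le_two_mul_exp_one_mul_sigSq hk hs hs1.le
    _ = √(2 * exp 1) * s ^ (1 / (2 * (k : ℝ))) * √(sigSq k s) := by
        rw [sqrt_mul (by positivity)]
        ring
end

section
/- One has 1/12 − ∫_1^∞ B₂({x})/(2x²) dx = 1 − ln(√(2π)), where B₂(t) = t² − t + 1/6 is the second Bernoulli polynomial and {x} denotes the fractional part of x. -/
/-!
On `[n, n + 1]` the fractional part is `x - n`, so the integrand is a rational function of `x`
with an elementary primitive. Its integral over `[n, n + 1]` turns out to be
`log s(n + 1) - log s(n) + 1 / (12 n) - 1 / (12 (n + 1))`, where `s(n) = n! / (√(2n) (n / e) ^ n)`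
is Stirling's sequence. The integrals over `[1, N + 1]` therefore telescope, and the limit
`s(n) → √π` (Stirling's formula) evaluates the improper integral.
-/

open MeasureTheory Filter Real Set Topology Stirling

noncomputable def stirlingIntegrand (x : ℝ) : ℝ :=
  (Int.fract x ^ 2 - Int.fract x + 1 / 6) / (2 * x ^ 2)

lemma abs_sq_sub_self_add_one_sixth_le {t : ℝ} (h₀ : 0 ≤ t) (h₁ : t ≤ 1) :
    |t ^ 2 - t + 1 / 6| ≤ 1 / 6 := by
  rw [abs_le]
  constructor <;> nlinarith

lemma integrableOn_stirlingIntegrand : IntegrableOn stirlingIntegrand (Ioi 1) := by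
  have hmeas : Measurable stirlingIntegrand := by
    unfold stirlingIntegrand
    fun_prop
  refine ((integrableOn_Ioi_rpow_of_lt (by norm_num : (-2 : ℝ) < -1) one_pos).const_mul
    (1 / 12)).mono' hmeas.aestronglyMeasurable ?_
  filter_upwards [ae_restrict_mem measurableSet_Ioi] with x (hx : 1 < x)
  have hB := abs_sq_sub_self_add_one_sixth_le (Int.fract_nonneg x) (Int.fract_lt_one x).le
  have hx₀ : 0 < x := by linarith
  rw [Real.norm_eq_abs, stirlingIntegrand, abs_div,
    abs_of_pos (by positivity : (0 : ℝ) < 2 * x ^ 2), rpow_neg hx₀.le, rpow_two,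
    div_le_iff₀ (by positivity)]
  calc _ ≤ 1 / 6 := hB
    _ = 1 / 12 * (x ^ 2)⁻¹ * (2 * x ^ 2) := by field_simp; ring

lemma intervalIntegrable_stirlingIntegrand {a b : ℝ} (ha : 1 ≤ a) (hb : 1 ≤ b) :
    IntervalIntegrable stirlingIntegrand volume a b := by
  rw [intervalIntegrable_iff]
  exact integrableOn_stirlingIntegrand.mono_set fun x hx => (le_inf ha hb).trans_lt hx.1

lemma hasDerivAt_stirlingPrimitive (n : ℝ) {x : ℝ} (hx : 0 < x) :
    HasDerivAt (fun y => y / 2 - (n + 1 / 2) * log y - (n ^ 2 + n + 1 / 6) / 2 * y⁻¹)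
      (((x - n) ^ 2 - (x - n) + 1 / 6) / (2 * x ^ 2)) x := by
  refine ((((hasDerivAt_id x).div_const 2).sub
    ((hasDerivAt_log hx.ne').const_mul (n + 1 / 2))).sub
    ((hasDerivAt_inv hx.ne').const_mul ((n ^ 2 + n + 1 / 6) / 2))).congr_deriv ?_
  field_simp
  ring

lemma integral_stirlingIntegrand_natCast {n : ℕ} (hn₀ : n ≠ 0) :
    ∫ x in (n : ℝ)..n + 1, stirlingIntegrand x =
      1 - (n + 1 / 2) * (log (n + 1) - log n) + 1 / (12 * n) - 1 / (12 * (n + 1)) := by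
  have hn : (0 : ℝ) < n := by positivity
  rw [intervalIntegral.integral_eq_sub_of_hasDerivAt_of_le (by linarith)
    (f := fun y => y / 2 - (n + 1 / 2) * log y - (n ^ 2 + n + 1 / 6) / 2 * y⁻¹)]
  · field_simp
    ring
  · exact fun y hy =>
      (hasDerivAt_stirlingPrimitive n (hn.trans_le hy.1)).continuousAt.continuousWithinAt
  · intro x hx
    have hfract : Int.fract x = x - n :=
      Int.fract_eq_iff.2 ⟨by linarith [hx.1], by linarith [hx.2], n, by push_cast; ring⟩
    rw [stirlingIntegrand, hfract]
    exact hasDerivAt_stirlingPrimitive n (hn.trans hx.1)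
  · exact intervalIntegrable_stirlingIntegrand (by exact_mod_cast Nat.one_le_iff_ne_zero.2 hn₀)
      (by simp)

lemma log_stirlingSeq_succ_sub {n : ℕ} (hn : n ≠ 0) :
    log (stirlingSeq (n + 1)) - log (stirlingSeq n) = 1 - (n + 1 / 2) * (log (n + 1) - log n) := by
  have hn : (0 : ℝ) < n := by positivity
  rw [log_stirlingSeq_formula, log_stirlingSeq_formula, Nat.factorial_succ, Nat.cast_mul,
    log_mul (by positivity) (by positivity), Nat.cast_succ, log_mul two_ne_zero (by positivity),
    log_mul two_ne_zero hn.ne', log_div (by positivity) (exp_ne_zero 1),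
    log_div hn.ne' (exp_ne_zero 1), log_exp]
  ring

lemma intervalIntegral_one_stirlingIntegrand (N : ℕ) :
    ∫ x in (1 : ℝ)..N + 1, stirlingIntegrand x =
      log (stirlingSeq (N + 1)) - log (stirlingSeq 1) + 1 / 12 - 1 / (12 * (N + 1)) := by
  set F : ℕ → ℝ := fun k => log (stirlingSeq (k + 1)) - 1 / (12 * ((k : ℝ) + 1))
  have hsum := intervalIntegral.sum_integral_adjacent_intervals (μ := volume)
    (a := fun k : ℕ => ((k + 1 : ℕ) : ℝ)) (n := N)
    fun k _ => intervalIntegrable_stirlingIntegrand (Nat.one_le_cast.2 (by omega))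
      (Nat.one_le_cast.2 (by omega))
  have hstep (k : ℕ) :
      ∫ x in ((k + 1 : ℕ) : ℝ)..((k + 1 + 1 : ℕ) : ℝ), stirlingIntegrand x = F (k + 1) - F k := by
    rw [Nat.cast_succ (k + 1), integral_stirlingIntegrand_natCast k.succ_ne_zero,
      ← log_stirlingSeq_succ_sub k.succ_ne_zero]
    simp only [F]
    push_cast
    ring
  rw [Finset.sum_congr rfl fun k _ => hstep k, Finset.sum_range_sub, zero_add, Nat.cast_one,
    Nat.cast_succ] at hsum
  rw [← hsum]
  simp only [F]
  push_cast
  ring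

lemma integral_Ioi_one_stirlingIntegrand :
    ∫ x in Ioi 1, stirlingIntegrand x = log √π - log (stirlingSeq 1) + 1 / 12 := by
  have hlim : Tendsto (fun N : ℕ => ∫ x in (1 : ℝ)..N + 1, stirlingIntegrand x) atTop
      (𝓝 (∫ x in Ioi 1, stirlingIntegrand x)) :=
    intervalIntegral_tendsto_integral_Ioi 1 integrableOn_stirlingIntegrand
      (tendsto_atTop_add_const_right _ 1 tendsto_natCast_atTop_atTop)
  have hformula : Tendsto (fun N : ℕ => ∫ x in (1 : ℝ)..N + 1, stirlingIntegrand x) atTop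
      (𝓝 (log √π - log (stirlingSeq 1) + 1 / 12 - 0)) := by
    simp only [intervalIntegral_one_stirlingIntegrand]
    refine ((((tendsto_stirlingSeq_sqrt_pi.comp (tendsto_add_atTop_nat 1)).log
      (sqrt_pos.2 pi_pos).ne').sub_const _).add_const _).sub ?_
    simpa [mul_comm] using tendsto_one_div_add_atTop_nhds_zero_nat.const_mul (1 / 12 : ℝ)
  rw [tendsto_nhds_unique hlim hformula, sub_zero]

theorem stmt16 :
    1 / 12 - ∫ x in Set.Ioi (1 : ℝ), (Int.fract x ^ 2 - Int.fract x + 1 / 6) / (2 * x ^ 2) =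
      1 - Real.log (Real.sqrt (2 * Real.pi)) := by
  change 1 / 12 - ∫ x in Ioi 1, stirlingIntegrand x = _
  rw [integral_Ioi_one_stirlingIntegrand, stirlingSeq_one, log_div (exp_ne_zero 1) (by positivity),
    log_exp, log_sqrt pi_pos.le, log_sqrt zero_le_two, log_sqrt (by positivity),
    log_mul two_ne_zero pi_pos.ne']
  ring
end

section
/- (Báez-Duarte substitution.) Let f(z) = Σ_{n=0}^∞ a_n z^n be a nonconstant power series with nonnegative coefficients, a_0 > 0, and radius of convergence R > 0; let m_f(t) = t f'(t)/f(t) and σ_f²(t) = t m_f'(t). Assume f is strongly Gaussian. Let m̃_f be a continuous, strictly increasing function on [0,R) with m̃_f(t) → +∞ as t ↑ R such that (m_f(t) − m̃_f(t))/σ_f(t) → 0 as t ↑ R, and for each n ≥ 1 let τ_n ∈ (0,R) be defined by m̃_f(τ_n) = n. Let σ̃_f be any function with σ_f(t)/σ̃_f(t) → 1 as t ↑ R. Then a_n ~ f(τ_n)/(√(2π) τ_n^n σ̃_f(τ_n)) as n → ∞. -/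
/-! Cauchy's formula on the circle of radius `t`, after the substitution `θ = x / σ_f(t)`, writes
`2π aₙ tⁿ σ_f(t) / f(t)` as the integral over `[-πσ_f(t), πσ_f(t)]` of the normalized
characteristic function times `exp (i x (m_f(t) - n) / σ_f(t))`. At `t = τₙ` this frequency tends
to `0`, since `m̃_f(τₙ) = n`, so strong Gaussianity and dominated convergence send the integral to
`∫ exp (-x²/2) dx = √(2π)`; finally `σ_f(τₙ)` may be replaced by `σ̃_f(τₙ)`. -/

open Filter Topology

/-- The power series `f(t) = Σ aₙ tⁿ`, real variable. -/
noncomputable def fR (a : ℕ → ℝ) (t : ℝ) : ℝ := ∑' n : ℕ, a n * t ^ n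

/-- The power series `f(z) = Σ aₙ zⁿ`, complex variable. -/
noncomputable def fC (a : ℕ → ℝ) (z : ℂ) : ℂ := ∑' n : ℕ, (a n : ℂ) * z ^ n

/-- Mean of the Khinchin family of `f`: `m_f(t) = t f'(t)/f(t)`. -/
noncomputable def mf (a : ℕ → ℝ) (t : ℝ) : ℝ := t * deriv (fR a) t / fR a t

/-- Standard deviation of the Khinchin family of `f`: `σ_f(t) = √(t m_f'(t))`. -/
noncomputable def sf (a : ℕ → ℝ) (t : ℝ) : ℝ := Real.sqrt (t * deriv (mf a) t)

/-- Characteristic function of the normalized Khinchin variable of `f`. -/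
noncomputable def charf (a : ℕ → ℝ) (t θ : ℝ) : ℂ :=
  fC a ((t : ℂ) * Complex.exp (Complex.I * θ / (sf a t : ℂ))) / fC a (t : ℂ) *
    Complex.exp (-(Complex.I * θ * (mf a t : ℂ) / (sf a t : ℂ)))

open Complex MeasureTheory

section PowerSeries

variable {a : ℕ → ℝ} {t : ℝ}

lemma fC_ofReal : fC a t = fR a t := by
  simp only [fC, fR, ofReal_tsum, ofReal_mul, ofReal_pow]

lemma fR_pos (hpos : ∀ n, 0 ≤ a n) (h0 : 0 < a 0) (hsum : Summable fun n => a n * t ^ n)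
    (ht : 0 ≤ t) : 0 < fR a t := by
  have := hsum.le_tsum 0 fun n _ => mul_nonneg (hpos n) (pow_nonneg ht n)
  rw [pow_zero, mul_one] at this
  exact h0.trans_le this

lemma continuousOn_fC_closedBall (hpos : ∀ n, 0 ≤ a n) (hsum : Summable fun n => a n * t ^ n) :
    ContinuousOn (fC a) (Metric.closedBall 0 t) := by
  refine continuousOn_tsum (fun k => (continuous_const.mul (continuous_pow k)).continuousOn)
    hsum fun k z hz => ?_
  rw [mem_closedBall_zero_iff] at hz
  rw [norm_mul, norm_pow, norm_real, Real.norm_of_nonneg (hpos k)]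
  exact mul_le_mul_of_nonneg_left (pow_le_pow_left₀ (norm_nonneg z) hz k) (hpos k)

lemma continuous_fC_circle (hpos : ∀ n, 0 ≤ a n) (hsum : Summable fun n => a n * t ^ n)
    (ht : 0 ≤ t) : Continuous fun θ : ℝ => fC a (t * cexp (I * θ)) := by
  refine (continuousOn_fC_closedBall hpos hsum).comp_continuous (by fun_prop) fun θ => ?_
  rw [mem_closedBall_zero_iff, norm_mul, norm_exp_I_mul_ofReal, mul_one, norm_real,
    Real.norm_of_nonneg ht]

lemma continuous_charf (hpos : ∀ n, 0 ≤ a n) (hsum : Summable fun n => a n * t ^ n)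
    (ht : 0 ≤ t) : Continuous (charf a t) := by
  have h := (continuous_fC_circle hpos hsum ht).comp (continuous_id.div_const (sf a t))
  have he : Continuous fun θ : ℝ => cexp (-(I * θ * (mf a t : ℂ) / (sf a t : ℂ))) := by
    fun_prop
  refine ((h.div_const (fC a t)).mul he).congr fun θ => ?_
  simp only [charf, Function.comp_apply, id, ofReal_div, mul_div_assoc, Pi.mul_apply]

lemma integral_exp_int_mul_I {m : ℤ} (hm : m ≠ 0) :
    ∫ θ in -Real.pi..Real.pi, cexp (m * I * θ) = 0 := by
  have hc : (m : ℂ) * I ≠ 0 := mul_ne_zero (Int.cast_ne_zero.mpr hm) I_ne_zero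
  have hper : cexp (m * I * ↑Real.pi) = cexp (m * I * ↑(-Real.pi)) := by
    rw [ofReal_neg, show (m : ℂ) * I * Real.pi = m * I * -Real.pi + m * (2 * Real.pi * I) by ring,
      exp_add, exp_int_mul_two_pi_mul_I, mul_one]
  rw [integral_exp_mul_complex hc, hper, sub_self, zero_div]

lemma hasSum_fC_circle (hpos : ∀ n, 0 ≤ a n) (hsum : Summable fun n => a n * t ^ n)
    (ht : 0 ≤ t) (θ : ℝ) :
    HasSum (fun k => (a k : ℂ) * (t * cexp (I * θ)) ^ k) (fC a (t * cexp (I * θ))) := by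
  refine (Summable.of_norm_bounded hsum fun k => le_of_eq ?_).hasSum
  rw [norm_mul, norm_pow, norm_mul, norm_exp_I_mul_ofReal, mul_one, norm_real, norm_real,
    Real.norm_of_nonneg (hpos k), Real.norm_of_nonneg ht]

lemma integral_fC_circle_mul_exp (hpos : ∀ n, 0 ≤ a n) (hsum : Summable fun n => a n * t ^ n)
    (ht : 0 ≤ t) (n : ℕ) :
    ∫ θ in -Real.pi..Real.pi, fC a (t * cexp (I * θ)) * cexp (-(I * n * θ))
      = 2 * Real.pi * a n * t ^ n := by
  set F : ℕ → ℝ → ℂ := fun k θ => a k * t ^ k * cexp (((k - n : ℤ) : ℂ) * I * θ)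
  have hF : ∀ k θ, F k θ = a k * (t * cexp (I * θ)) ^ k * cexp (-(I * n * θ)) := by
    intro k θ
    simp only [F, mul_pow, ← exp_nat_mul, mul_assoc, ← exp_add]
    push_cast
    ring_nf
  have hnorm : ∀ k θ, ‖F k θ‖ = a k * t ^ k := fun k θ => by
    simp [F, norm_exp, Real.norm_of_nonneg (hpos k), Real.norm_of_nonneg ht]
  have hseries := intervalIntegral.hasSum_integral_of_dominated_convergence
    (a := -Real.pi) (b := Real.pi) (μ := volume) (fun k _ => a k * t ^ k)
    (fun k => (by fun_prop : Continuous (F k)).aestronglyMeasurable)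
    (fun k => ae_of_all _ fun θ _ => (hnorm k θ).le) (ae_of_all _ fun _ _ => hsum)
    intervalIntegrable_const
    (ae_of_all _ fun θ _ => by
      simpa only [hF] using (hasSum_fC_circle hpos hsum ht θ).mul_right _)
  have hoff : ∀ k ≠ n, ∫ θ in -Real.pi..Real.pi, F k θ = 0 := fun k hk => by
    simp only [F, intervalIntegral.integral_const_mul]
    rw [integral_exp_int_mul_I (sub_ne_zero.mpr (by exact_mod_cast hk)), mul_zero]
  refine (hseries.unique (hasSum_single n hoff)).trans ?_
  simp only [F, sub_self, Int.cast_zero, zero_mul, exp_zero, mul_one,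
    intervalIntegral.integral_const, sub_neg_eq_add, real_smul, ofReal_add]
  ring

lemma integral_charf_mul_exp (hpos : ∀ n, 0 ≤ a n) (hsum : Summable fun n => a n * t ^ n)
    (ht : 0 ≤ t) (hσ : sf a t ≠ 0) (n : ℕ) :
    ∫ x in -(Real.pi * sf a t)..Real.pi * sf a t,
        charf a t x * cexp (I * ↑(x * ((mf a t - n) / sf a t)))
      = ↑(2 * Real.pi * a n * t ^ n * sf a t / fR a t) := by
  set g : ℝ → ℂ := fun θ => fC a (t * cexp (I * θ)) * cexp (-(I * n * θ)) / fC a t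
  have hcharf : ∀ x : ℝ,
      charf a t x * cexp (I * ↑(x * ((mf a t - n) / sf a t))) = g (x / sf a t) := fun x => by
    simp only [charf, g, div_mul_eq_mul_div, mul_assoc, ← exp_add]
    push_cast
    congr 4
    field_simp
    ring
  rw [intervalIntegral.integral_congr fun x _ => hcharf x, intervalIntegral.integral_comp_div g hσ,
    neg_div, mul_div_cancel_right₀ _ hσ, intervalIntegral.integral_div,
    integral_fC_circle_mul_exp hpos hsum ht, fC_ofReal, real_smul]
  push_cast
  ring

end PowerSeries

section Gaussian

lemma integral_cexp_neg_sq_div_two :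
    ∫ x : ℝ, cexp (-(x : ℂ) ^ 2 / 2) = √(2 * Real.pi) := by
  have h : ∀ x : ℝ, cexp (-(x : ℂ) ^ 2 / 2) = ↑(Real.exp (-(1 / 2) * x ^ 2)) := fun x => by
    push_cast
    ring_nf
  simp_rw [h]
  rw [integral_complex_ofReal, integral_gaussian]
  norm_num [mul_comm]

lemma tendsto_intervalIntegral_of_dominated {ι E : Type*} [NormedAddCommGroup E]
    [NormedSpace ℝ E] {l : Filter ι} [l.IsCountablyGenerated] {F : ι → ℝ → E} {f : ℝ → E}
    {L : ι → ℝ} (bound : ℝ → ℝ) (hL : Tendsto L l atTop)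
    (hF_meas : ∀ i, AEStronglyMeasurable (F i)) (h_bound : ∀ i x, ‖F i x‖ ≤ bound x)
    (bound_integrable : Integrable bound) (h_lim : ∀ x, Tendsto (fun i => F i x) l (𝓝 (f x))) :
    Tendsto (fun i => ∫ x in -L i..L i, F i x) l (𝓝 (∫ x, f x)) := by
  set G : ι → ℝ → E := fun i => (Set.Ioc (-L i) (L i)).indicator (F i)
  have hG : Tendsto (fun i => ∫ x, G i x) l (𝓝 (∫ x, f x)) := by
    refine tendsto_integral_filter_of_dominated_convergence bound
      (.of_forall fun i => (hF_meas i).indicator measurableSet_Ioc)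
      (.of_forall fun i => ae_of_all _ fun x => ?_) bound_integrable (ae_of_all _ fun x => ?_)
    · exact (norm_indicator_le_norm_self _ _).trans (h_bound i x)
    · refine (h_lim x).congr' ?_
      filter_upwards [hL.eventually_gt_atTop |x|] with i hi
      have hx : x ∈ Set.Ioc (-L i) (L i) :=
        ⟨by linarith [neg_abs_le x], (le_abs_self x).trans hi.le⟩
      exact (Set.indicator_of_mem hx _).symm
  refine hG.congr' ?_
  filter_upwards [hL.eventually_ge_atTop 0] with i hi
  rw [integral_indicator measurableSet_Ioc, intervalIntegral.integral_of_le (by linarith)]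

lemma tendsto_integral_gauss_mul_exp {ι : Type*} {l : Filter ι} [l.IsCountablyGenerated]
    {L c : ι → ℝ} (hL : Tendsto L l atTop) (hc : Tendsto c l (𝓝 0)) :
    Tendsto (fun i => ∫ x in -L i..L i, cexp (-(x : ℂ) ^ 2 / 2) * cexp (I * ↑(x * c i))) l
      (𝓝 √(2 * Real.pi)) := by
  rw [← integral_cexp_neg_sq_div_two]
  refine tendsto_intervalIntegral_of_dominated (fun x => Real.exp (-(1 / 2) * x ^ 2)) hL
    (fun i => (by fun_prop : Continuous _).aestronglyMeasurable) (fun i x => le_of_eq ?_)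
    (integrable_exp_neg_mul_sq (by norm_num)) fun x => ?_
  · rw [norm_mul, norm_exp_I_mul_ofReal, mul_one, norm_exp]
    congr 1
    simp only [← ofReal_pow, div_ofNat_re, neg_re, ofReal_re]
    ring
  · have h : Tendsto (fun i => cexp (I * ↑(x * c i))) l (𝓝 1) := by
      have hcont : Continuous fun s : ℝ => cexp (I * ((x * s : ℝ) : ℂ)) := by fun_prop
      simpa [Function.comp_def] using (hcont.tendsto 0).comp hc
    simpa using h.const_mul (cexp (-(x : ℂ) ^ 2 / 2))

end Gaussian

lemma norm_integral_mul_exp_sub_le {u v : ℝ → ℂ} {α β c : ℝ} (hαβ : α ≤ β)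
    (hu : IntervalIntegrable u volume α β) (hv : IntervalIntegrable v volume α β) :
    ‖(∫ x in α..β, u x * cexp (I * ↑(x * c))) - ∫ x in α..β, v x * cexp (I * ↑(x * c))‖
      ≤ ∫ x in α..β, ‖u x - v x‖ := by
  have he : ContinuousOn (fun x : ℝ => cexp (I * ↑(x * c))) (Set.uIcc α β) :=
    (by fun_prop : Continuous fun x : ℝ => cexp (I * ↑(x * c))).continuousOn
  rw [← intervalIntegral.integral_sub (hu.mul_continuousOn he) (hv.mul_continuousOn he)]
  refine (intervalIntegral.norm_integral_le_integral_norm hαβ).trans_eq ?_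
  simp only [← sub_mul, norm_mul, norm_exp_I_mul_ofReal, mul_one]

lemma tendsto_integral_charf_mul_exp {a : ℕ → ℝ} (hpos : ∀ n, 0 ≤ a n) {ι : Type*}
    {l : Filter ι} [l.IsCountablyGenerated] {t c : ι → ℝ}
    (ht : ∀ᶠ i in l, 0 ≤ t i ∧ Summable fun n => a n * t i ^ n)
    (hσ : Tendsto (fun i => sf a (t i)) l atTop)
    (hstrong : Tendsto (fun i => ∫ θ in -(Real.pi * sf a (t i))..Real.pi * sf a (t i),
      ‖charf a (t i) θ - cexp (-(θ : ℂ) ^ 2 / 2)‖) l (𝓝 0))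
    (hc : Tendsto c l (𝓝 0)) :
    Tendsto (fun i => ∫ x in -(Real.pi * sf a (t i))..Real.pi * sf a (t i),
      charf a (t i) x * cexp (I * ↑(x * c i))) l (𝓝 √(2 * Real.pi)) := by
  have hL : Tendsto (fun i => Real.pi * sf a (t i)) l atTop := hσ.const_mul_atTop Real.pi_pos
  have hdiff := squeeze_zero_norm' (by
    filter_upwards [ht, hL.eventually_ge_atTop 0] with i hti hLi
    exact norm_integral_mul_exp_sub_le (c := c i) (by linarith)
      ((continuous_charf hpos hti.2 hti.1).intervalIntegrable _ _)
      ((by fun_prop : Continuous fun x : ℝ => cexp (-(x : ℂ) ^ 2 / 2)).intervalIntegrable _ _))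
    hstrong
  simpa using hdiff.add (tendsto_integral_gauss_mul_exp hL hc)

lemma div_div_sqrt_two_pi_eq {A F T σ S : ℝ} (hF : F ≠ 0) (hσ : σ ≠ 0) (hS : S ≠ 0) :
    A / (F / (√(2 * Real.pi) * T * S))
      = 2 * Real.pi * A * T * σ / F / √(2 * Real.pi) * (σ / S)⁻¹ := by
  have h2π : √(2 * Real.pi) ^ 2 = 2 * Real.pi := Real.sq_sqrt (by positivity)
  have hs : √(2 * Real.pi) ≠ 0 := by positivity
  field_simp
  rw [h2π]
  ring

lemma tendsto_nhdsLT_of_monotoneOn {ι : Type*} {l : Filter ι} {m : ℝ → ℝ} {α R : ℝ}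
    (hαR : α < R) (hm : MonotoneOn m (Set.Ico α R)) {τ : ι → ℝ}
    (hτ : ∀ᶠ i in l, τ i ∈ Set.Ico α R) (hmτ : Tendsto (m ∘ τ) l atTop) :
    Tendsto τ l (𝓝[<] R) := by
  refine tendsto_nhdsWithin_iff.2 ⟨tendsto_order.2 ⟨fun r hr => ?_, fun r hr => ?_⟩,
    hτ.mono fun i hi => hi.2⟩
  · have hs : max r α ∈ Set.Ico α R := ⟨le_max_right r α, max_lt hr hαR⟩
    filter_upwards [hτ, hmτ.eventually_gt_atTop (m (max r α))] with i hi hmi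
    by_contra! hle
    exact (hm hi hs (hle.trans (le_max_left r α))).not_gt hmi
  · exact hτ.mono fun i hi => hi.2.trans hr

theorem stmt19_general (a : ℕ → ℝ) (R : ℝ) (hR : 0 < R)
    (hpos : ∀ n, 0 ≤ a n) (h0 : 0 < a 0)
    (hconv : ∀ t : ℝ, |t| < R → Summable fun n => a n * t ^ n)
    (hsigma : Tendsto (sf a) (𝓝[<] R) atTop)
    (hstrong : Tendsto (fun t : ℝ =>
        ∫ θ in (-(Real.pi * sf a t))..(Real.pi * sf a t),
          ‖charf a t θ - Complex.exp (-(θ : ℂ) ^ 2 / 2)‖)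
      (𝓝[<] R) (𝓝 0))
    (mt : ℝ → ℝ)
    (hmtMono : StrictMonoOn mt (Set.Ico 0 R))
    (happrox : Tendsto (fun t : ℝ => (mf a t - mt t) / sf a t) (𝓝[<] R) (𝓝 0))
    (τ : ℕ → ℝ) (hτ : ∀ᶠ n : ℕ in atTop, τ n ∈ Set.Ioo 0 R ∧ mt (τ n) = n)
    (st : ℝ → ℝ) (hst : Tendsto (fun t : ℝ => sf a t / st t) (𝓝[<] R) (𝓝 1)) :
    Tendsto (fun n : ℕ =>
        a n / (fR a (τ n) / (Real.sqrt (2 * Real.pi) * (τ n) ^ n * st (τ n))))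
      atTop (𝓝 1) := by
  have hτR : Tendsto τ atTop (𝓝[<] R) :=
    tendsto_nhdsLT_of_monotoneOn hR hmtMono.monotoneOn (hτ.mono fun n hn => ⟨hn.1.1.le, hn.1.2⟩)
      (tendsto_natCast_atTop_atTop.congr' (hτ.mono fun n hn => hn.2.symm))
  have hτconv : ∀ᶠ n in atTop, 0 ≤ τ n ∧ Summable fun k => a k * τ n ^ k :=
    hτ.mono fun n hn => ⟨hn.1.1.le, hconv _ (abs_lt.2 ⟨by linarith [hn.1.1], hn.1.2⟩)⟩
  have hσ := hsigma.comp hτR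
  have hc : Tendsto (fun n : ℕ => (mf a (τ n) - n) / sf a (τ n)) atTop (𝓝 0) :=
    (happrox.comp hτR).congr' (hτ.mono fun n hn => by simp [hn.2])
  have hcoeff : Tendsto (fun n => 2 * Real.pi * a n * τ n ^ n * sf a (τ n) / fR a (τ n)) atTop
      (𝓝 √(2 * Real.pi)) := by
    rw [← tendsto_ofReal_iff]
    refine (tendsto_integral_charf_mul_exp hpos hτconv hσ (hstrong.comp hτR) hc).congr' ?_
    filter_upwards [hτconv, hσ.eventually_gt_atTop 0] with n hn hσn
    exact integral_charf_mul_exp hpos hn.2 hn.1 hσn.ne' n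
  have hratio := hst.comp hτR
  have hlim := (hcoeff.div_const √(2 * Real.pi)).mul (hratio.inv₀ one_ne_zero)
  rw [div_self (by positivity), inv_one, mul_one] at hlim
  refine hlim.congr' ?_
  filter_upwards [hτconv, hσ.eventually_gt_atTop 0, hratio.eventually_ne one_ne_zero]
    with n hn hσn hstn
  exact (div_div_sqrt_two_pi_eq (fR_pos hpos h0 hn.2 hn.1).ne' hσn.ne'
    fun h => hstn (by simp [h])).symm

theorem stmt19 (a : ℕ → ℝ) (R : ℝ) (hR : 0 < R)
    (hpos : ∀ n, 0 ≤ a n) (h0 : 0 < a 0) (hnc : ∃ n, 1 ≤ n ∧ a n ≠ 0)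
    (hconv : ∀ t : ℝ, |t| < R → Summable fun n => a n * t ^ n)
    (hdiv : ∀ t : ℝ, R < t → ¬ Summable fun n => a n * t ^ n)
    (hsigma : Tendsto (sf a) (𝓝[<] R) atTop)
    (hstrong : Tendsto (fun t : ℝ =>
        ∫ θ in (-(Real.pi * sf a t))..(Real.pi * sf a t),
          ‖charf a t θ - Complex.exp (-(θ : ℂ) ^ 2 / 2)‖)
      (𝓝[<] R) (𝓝 0))
    (mt : ℝ → ℝ) (hmtCont : ContinuousOn mt (Set.Ico 0 R))
    (hmtMono : StrictMonoOn mt (Set.Ico 0 R))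
    (hmtTop : Tendsto mt (𝓝[<] R) atTop)
    (happrox : Tendsto (fun t : ℝ => (mf a t - mt t) / sf a t) (𝓝[<] R) (𝓝 0))
    (τ : ℕ → ℝ) (hτ : ∀ᶠ n : ℕ in atTop, τ n ∈ Set.Ioo 0 R ∧ mt (τ n) = n)
    (st : ℝ → ℝ) (hst : Tendsto (fun t : ℝ => sf a t / st t) (𝓝[<] R) (𝓝 1)) :
    Tendsto (fun n : ℕ =>
        a n / (fR a (τ n) / (Real.sqrt (2 * Real.pi) * (τ n) ^ n * st (τ n))))
      atTop (𝓝 1) :=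
  stmt19_general a R hR hpos h0 hconv hsigma hstrong mt hmtMono happrox τ hτ st hst
end
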